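/- Let k ≥ 1 be an integer and let w be a real number. Then the sets S = {ξ ∈ ℝ : ω_k(ξ) ≥ w} and S^lead = {ξ ∈ ℝ : ω_k^lead(ξ) ≥ w} have the same Hausdorff dimension. -/

import Mathlib

open Polynomial Filter

/-- The height (maximum absolute value of coefficients) of an integer polynomial,
as a real number. -/
noncomputable def intPolyNorm (P : Polynomial ℤ) : ℝ :=
  ((P.support.sup fun i => (P.coeff i).natAbs : ℕ) : ℝ)

/-- The height (maximum absolute value of coefficients) of a real polynomial. -/
noncomputable def realPolyNorm (P : Polynomial ℝ) : ℝ :=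
  (Finset.range (P.natDegree + 1)).sup' Finset.nonempty_range_add_one fun i => |P.coeff i|

/-- The maximum norm of an integer vector, as a real number. -/
noncomputable def vecNorm {n : ℕ} (x : Fin (n + 1) → ℤ) : ℝ :=
  ((Finset.univ.sup fun i => (x i).natAbs : ℕ) : ℝ)

/-- The exponent `ω_n(ξ)`: the supremum (in `EReal`) of all `ω ∈ ℝ` for which there are
infinitely many nonzero `P ∈ ℤ[x]` with `deg P ≤ n` and `|P(ξ)| ≤ ‖P‖ ^ (-ω)`. -/
noncomputable def omegaExp (n : ℕ) (ξ : ℝ) : EReal :=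
  sSup (Real.toEReal '' {ω : ℝ |
    {P : Polynomial ℤ | P ≠ 0 ∧ P.natDegree ≤ n ∧
      |Polynomial.aeval ξ P| ≤ intPolyNorm P ^ (-ω)}.Infinite})

/-- The exponent `ω_n^lead(ξ)`: as `ω_n(ξ)`, but restricted to polynomials whose
coefficient of `x^n` has absolute value equal to the height. -/
noncomputable def omegaLeadExp (n : ℕ) (ξ : ℝ) : EReal :=
  sSup (Real.toEReal '' {ω : ℝ |
    {P : Polynomial ℤ | P ≠ 0 ∧ P.natDegree ≤ n ∧
      ((P.coeff n).natAbs : ℝ) = intPolyNorm P ∧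
      |Polynomial.aeval ξ P| ≤ intPolyNorm P ^ (-ω)}.Infinite})

/-- The exponent `λ_n(ξ)`: the supremum (in `EReal`) of all `λ ∈ ℝ` for which there are
infinitely many nonzero `x = (x_0, …, x_n) ∈ ℤ^{n+1}` with
`max_{1 ≤ m ≤ n} |x_0 ξ^m − x_m| ≤ ‖x‖ ^ (−λ)`. -/
noncomputable def lambdaExp (n : ℕ) (ξ : ℝ) : EReal :=
  sSup (Real.toEReal '' {l : ℝ |
    {x : Fin (n + 1) → ℤ | x ≠ 0 ∧ ∀ m : Fin (n + 1), 1 ≤ (m : ℕ) →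
      |(x 0 : ℝ) * ξ ^ (m : ℕ) - (x m : ℝ)| ≤ vecNorm x ^ (-l)}.Infinite})

/-- The polynomial `Q(x) = (Mx)^k · P(1/(Mx) + r)`, i.e. `∑_{j=0}^{k} a_j M^{k−j} x^{k−j}`
where `P(x + r) = ∑_j a_j x^j`. -/
noncomputable def Qpoly (k : ℕ) (M : ℤ) (r : ℤ) (P : Polynomial ℤ) : Polynomial ℤ :=
  ∑ j ∈ Finset.range (k + 1),
    Polynomial.C ((P.comp (Polynomial.X + Polynomial.C r)).coeff j * M ^ (k - j)) *
      Polynomial.X ^ (k - j)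

/-!
Cover `{ω_k ≥ w}` by unit intervals `[N, N + 1)`. Interpolation at the `k + 1` integer nodes
`N + 2, …, N + 2 + k` shows that every `P` of degree at most `k` has a node `r` with
`‖P‖ ≪ |P(r)|`, and a pigeonhole argument gives one node serving every `ω < w`. Writing
`P(x + r) = ∑ aⱼ xʲ` with `a₀ = P(r)`, the polynomial `Q = ∑ aⱼ M^(k-j) x^(k-j)` (`Qpoly`) has
`a₀ Mᵏ`, its coefficient of `xᵏ`, as its height once `M` is large; its height is comparable to
`‖P‖`, and `|Q(ζ)| ≤ |P(ξ)|` at `ζ = 1 / (M (ξ - r))`. Hence `ω_k^lead(ζ) ≥ w`, and `ξ ↦ ζ` has a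
smooth inverse on the negative half-line, so it does not lower Hausdorff dimension. The other
inequality is the inclusion `{ω_k^lead ≥ w} ⊆ {ω_k ≥ w}`.
-/

lemma natAbs_coeff_le_intPolyNorm (P : ℤ[X]) (i : ℕ) :
    ((P.coeff i).natAbs : ℝ) ≤ intPolyNorm P := by
  by_cases hi : i ∈ P.support
  · exact Nat.cast_le.mpr (Finset.le_sup (f := fun i => (P.coeff i).natAbs) hi)
  · simp [notMem_support_iff.mp hi, intPolyNorm]

lemma abs_coeff_le_intPolyNorm (P : ℤ[X]) (i : ℕ) : |(P.coeff i : ℝ)| ≤ intPolyNorm P := by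
  simpa [Nat.cast_natAbs] using natAbs_coeff_le_intPolyNorm P i

lemma exists_abs_coeff_eq_intPolyNorm (P : ℤ[X]) : ∃ i, |(P.coeff i : ℝ)| = intPolyNorm P := by
  rcases P.support.eq_empty_or_nonempty with hP | hP
  · exact ⟨0, by simp [intPolyNorm, support_eq_empty.mp hP]⟩
  · obtain ⟨i, -, hi⟩ := Finset.exists_mem_eq_sup _ hP fun i => (P.coeff i).natAbs
    exact ⟨i, by simp [intPolyNorm, hi, Nat.cast_natAbs]⟩

lemma one_le_intPolyNorm {P : ℤ[X]} (hP : P ≠ 0) : 1 ≤ intPolyNorm P :=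
  calc (1 : ℝ) ≤ |(P.leadingCoeff : ℝ)| := by
        exact_mod_cast Int.one_le_abs (leadingCoeff_ne_zero.mpr hP)
    _ ≤ intPolyNorm P := abs_coeff_le_intPolyNorm P _

lemma intPolyNorm_eq_natAbs_coeff_of_forall_le {P : ℤ[X]} {n : ℕ}
    (h : ∀ i, |P.coeff i| ≤ |P.coeff n|) : intPolyNorm P = (P.coeff n).natAbs := by
  obtain ⟨i, hi⟩ := exists_abs_coeff_eq_intPolyNorm P
  refine le_antisymm ?_ (natAbs_coeff_le_intPolyNorm P n)
  rw [← hi, Nat.cast_natAbs, Int.cast_abs]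
  exact_mod_cast h i

lemma finite_setOf_natDegree_le_intPolyNorm_le (k : ℕ) (B : ℝ) :
    {P : ℤ[X] | P.natDegree ≤ k ∧ intPolyNorm P ≤ B}.Finite := by
  set S := {P : ℤ[X] | P.natDegree ≤ k ∧ intPolyNorm P ≤ B}
  have hinj : S.InjOn fun P (i : Fin (k + 1)) => P.coeff i := by
    intro P hP Q hQ hPQ
    ext n
    rcases le_or_gt n k with hn | hn
    · exact congrFun hPQ ⟨n, Nat.lt_succ_of_le hn⟩
    · rw [coeff_eq_zero_of_natDegree_lt (hP.1.trans_lt hn),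
        coeff_eq_zero_of_natDegree_lt (hQ.1.trans_lt hn)]
  refine Set.Finite.of_finite_image (Set.Finite.subset
    (Set.Finite.pi fun _ => Set.finite_Icc (-⌊B⌋) ⌊B⌋) ?_) hinj
  rintro _ ⟨P, hP, rfl⟩ i -
  have : ((|P.coeff i| : ℤ) : ℝ) ≤ B := by
    push_cast; exact (abs_coeff_le_intPolyNorm P i).trans hP.2
  exact abs_le.mp (Int.le_floor.mpr this)

lemma infinite_iff_forall_exists_lt_intPolyNorm {k : ℕ} {S : Set ℤ[X]}
    (hS : ∀ P ∈ S, P.natDegree ≤ k) : S.Infinite ↔ ∀ B, ∃ P ∈ S, B < intPolyNorm P := by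
  refine ⟨fun hinf B => ?_, fun h hfin => ?_⟩
  · by_contra! hB
    exact hinf ((finite_setOf_natDegree_le_intPolyNorm_le k B).subset
      fun P hP => ⟨hS P hP, hB P hP⟩)
  · obtain ⟨B, hB⟩ := (hfin.image intPolyNorm).bddAbove
    obtain ⟨P, hP, hlt⟩ := h B
    exact (hB ⟨P, hP, rfl⟩).not_gt hlt

lemma coe_le_sSup_image_coe_iff {S : Set ℝ} (hS : ∀ ⦃a b⦄, a ∈ S → b ≤ a → b ∈ S) (w : ℝ) :
    (w : EReal) ≤ sSup (Real.toEReal '' S) ↔ ∀ ω < w, ω ∈ S := by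
  refine ⟨fun h ω hω => ?_, fun h => le_of_forall_lt fun c hc => ?_⟩
  · obtain ⟨_, ⟨a, ha, rfl⟩, hωa⟩ := lt_sSup_iff.mp ((EReal.coe_lt_coe_iff.mpr hω).trans_le h)
    exact hS ha (EReal.coe_lt_coe_iff.mp hωa).le
  · obtain ⟨ω, hcω, hωw⟩ := EReal.lt_iff_exists_real_btwn.mp hc
    exact hcω.trans_le (le_sSup ⟨ω, h ω (EReal.coe_lt_coe_iff.mp hωw), rfl⟩)

def approxSet (n : ℕ) (ξ ω : ℝ) : Set ℤ[X] :=
  {P | P ≠ 0 ∧ P.natDegree ≤ n ∧ |aeval ξ P| ≤ intPolyNorm P ^ (-ω)}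

lemma approxSet_antitone (n : ℕ) (ξ : ℝ) : Antitone (approxSet n ξ) :=
  fun _ _ hab _ ⟨hP, hdeg, happrox⟩ => ⟨hP, hdeg,
    happrox.trans (Real.rpow_le_rpow_of_exponent_le (one_le_intPolyNorm hP) (by linarith))⟩

lemma coe_le_omegaExp_iff {n : ℕ} {ξ : ℝ} (w : ℝ) :
    (w : EReal) ≤ omegaExp n ξ ↔ ∀ ω < w, (approxSet n ξ ω).Infinite :=
  coe_le_sSup_image_coe_iff (fun _ _ ha hba => ha.mono (approxSet_antitone n ξ hba)) w

lemma coe_le_omegaLeadExp_iff {n : ℕ} {ξ : ℝ} (w : ℝ) :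
    (w : EReal) ≤ omegaLeadExp n ξ ↔
      ∀ ω < w, {P ∈ approxSet n ξ ω | ((P.coeff n).natAbs : ℝ) = intPolyNorm P}.Infinite := by
  have hset : ∀ ω, {P ∈ approxSet n ξ ω | ((P.coeff n).natAbs : ℝ) = intPolyNorm P} =
      {P : ℤ[X] | P ≠ 0 ∧ P.natDegree ≤ n ∧ ((P.coeff n).natAbs : ℝ) = intPolyNorm P ∧
        |aeval ξ P| ≤ intPolyNorm P ^ (-ω)} := fun ω => by
    ext P; simp only [approxSet, Set.mem_ofPred_eq]; tauto
  simp only [omegaLeadExp, ← hset]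
  exact coe_le_sSup_image_coe_iff
    (fun _ _ ha hba => ha.mono fun _ hP => ⟨approxSet_antitone n ξ hba hP.1, hP.2⟩) w

lemma omegaLeadExp_le_omegaExp (n : ℕ) (ξ : ℝ) : omegaLeadExp n ξ ≤ omegaExp n ξ :=
  sSup_le_sSup <| Set.image_mono fun _ hω =>
    hω.mono fun _ hP => ⟨hP.1, hP.2.1, hP.2.2.2⟩

lemma exists_forall_lt_of_antitone {α ι : Type*} [LinearOrder α] [NoMinOrder α] [Fintype ι]
    {A : α → ι → Prop} (hA : ∀ i, Antitone (A · i)) {w : α} (h : ∀ a < w, ∃ i, A a i) :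
    ∃ i, ∀ a < w, A a i := by
  by_contra! hne
  choose a haw ha using hne
  obtain ⟨b, hb⟩ := exists_lt w
  obtain ⟨i₀, -⟩ := h b hb
  set m := Finset.univ.sup' ⟨i₀, Finset.mem_univ _⟩ a
  obtain ⟨i, hi⟩ := h m ((Finset.sup'_lt_iff _).mpr fun i _ => haw i)
  exact ha i (hA i (Finset.le_sup' a (Finset.mem_univ i)) hi)

open scoped Matrix

lemma intPolyNorm_le_norm_coeff {k : ℕ} {P : ℤ[X]} (hP : P.natDegree ≤ k) :
    intPolyNorm P ≤ ‖fun i : Fin (k + 1) => (P.coeff i : ℝ)‖ := by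
  obtain ⟨i, hi⟩ := exists_abs_coeff_eq_intPolyNorm P
  rw [← hi]
  rcases le_or_gt i k with hik | hik
  · exact norm_le_pi_norm (fun j : Fin (k + 1) => (P.coeff j : ℝ)) ⟨i, Nat.lt_succ_of_le hik⟩
  · simp [coeff_eq_zero_of_natDegree_lt (hP.trans_lt hik)]

lemma exists_intPolyNorm_le_mul_abs_aeval {k : ℕ} {x : Fin (k + 1) → ℝ}
    (hx : Function.Injective x) :
    ∃ C : ℝ, 0 ≤ C ∧ ∀ P : ℤ[X], P.natDegree ≤ k → ∃ i, intPolyNorm P ≤ C * |aeval (x i) P| := by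
  set V := Matrix.vandermonde x
  have hker : LinearMap.ker V.mulVecLin = ⊥ := Matrix.ker_mulVecLin_eq_bot_iff.mpr fun _ hv =>
    Matrix.eq_zero_of_mulVec_eq_zero (Matrix.det_vandermonde_ne_zero_iff.mpr hx) hv
  obtain ⟨K, -, hK⟩ := V.mulVecLin.exists_antilipschitzWith hker
  refine ⟨K, K.2, fun P hP => ?_⟩
  set p : Fin (k + 1) → ℝ := fun j => P.coeff j
  have hVp : ∀ i, (V *ᵥ p) i = aeval (x i) P := fun i => by
    rw [aeval_eq_sum_range' (Nat.lt_succ_of_le hP), ← Fin.sum_univ_eq_sum_range]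
    simp [V, p, Matrix.mulVec, dotProduct, mul_comm]
  obtain ⟨i, hi⟩ := Finite.exists_max fun i => |(V *ᵥ p) i|
  refine ⟨i, ?_⟩
  calc intPolyNorm P ≤ ‖p‖ := intPolyNorm_le_norm_coeff hP
    _ ≤ K * ‖V *ᵥ p‖ := hK.le_mul_norm (map_zero V.mulVecLin) p
    _ ≤ K * |aeval (x i) P| := by
        gcongr
        rw [← hVp]
        exact (pi_norm_le_iff_of_nonneg (abs_nonneg _)).mpr fun j => hi j

lemma exists_abs_coeff_comp_X_add_C_le (k : ℕ) (r : ℤ) :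
    ∃ c : ℝ, 0 ≤ c ∧ ∀ P : ℤ[X], P.natDegree ≤ k → ∀ j,
      |((P.comp (X + C r)).coeff j : ℝ)| ≤ c * intPolyNorm P := by
  refine ⟨(k + 1) * ((|(r : ℝ)| + 1) ^ k * 2 ^ k), by positivity, fun P hP j => ?_⟩
  have hcoeff : (P.comp (X + C r)).coeff j =
      ∑ i ∈ Finset.range (k + 1), P.coeff i * (r ^ (i - j) * i.choose j) := by
    rw [comp_eq_sum_left, sum_over_range' _ (fun _ => by simp) _ (Nat.lt_succ_of_le hP),
      finsetSum_coeff]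
    simp only [coeff_C_mul, coeff_X_add_C_pow]
  have hterm : ∀ i ∈ Finset.range (k + 1),
      |(P.coeff i : ℝ) * ((r : ℝ) ^ (i - j) * i.choose j)| ≤
        intPolyNorm P * ((|(r : ℝ)| + 1) ^ k * 2 ^ k) := fun i hi => by
    have hik : i ≤ k := Nat.lt_succ_iff.mp (Finset.mem_range.mp hi)
    have hcoeff := abs_coeff_le_intPolyNorm P i
    have hpow : |(r : ℝ)| ^ (i - j) ≤ (|(r : ℝ)| + 1) ^ k :=
      calc |(r : ℝ)| ^ (i - j) ≤ (|(r : ℝ)| + 1) ^ (i - j) := by gcongr; linarith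
        _ ≤ (|(r : ℝ)| + 1) ^ k := pow_le_pow_right₀ (by linarith [abs_nonneg (r : ℝ)]) (by omega)
    have hchoose : (i.choose j : ℝ) ≤ 2 ^ k := by
      exact_mod_cast (Nat.choose_le_two_pow i j).trans (Nat.pow_le_pow_right two_pos hik)
    rw [abs_mul, abs_mul, abs_pow, Nat.abs_cast]
    exact mul_le_mul hcoeff (mul_le_mul hpow hchoose (by positivity) (by positivity))
      (by positivity) ((abs_nonneg _).trans hcoeff)
  calc |((P.comp (X + C r)).coeff j : ℝ)|
      ≤ ∑ i ∈ Finset.range (k + 1), |(P.coeff i : ℝ) * ((r : ℝ) ^ (i - j) * i.choose j)| := by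
        rw [hcoeff]; push_cast; exact Finset.abs_sum_le_sum_abs _ _
    _ ≤ ∑ _i ∈ Finset.range (k + 1), intPolyNorm P * ((|(r : ℝ)| + 1) ^ k * 2 ^ k) :=
        Finset.sum_le_sum hterm
    _ = (k + 1) * ((|(r : ℝ)| + 1) ^ k * 2 ^ k) * intPolyNorm P := by
        rw [Finset.sum_const, Finset.card_range, nsmul_eq_mul]; push_cast; ring

section Qpoly

variable {k : ℕ} {M r : ℤ} {P : ℤ[X]}

lemma Qpoly_natDegree_le : (Qpoly k M r P).natDegree ≤ k :=
  natDegree_sum_le_of_forall_le _ _ fun j _ =>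
    (natDegree_C_mul_X_pow_le _ _).trans (Nat.sub_le k j)

lemma Qpoly_coeff {d : ℕ} (hd : d ≤ k) :
    (Qpoly k M r P).coeff d = (P.comp (X + C r)).coeff (k - d) * M ^ d := by
  rw [Qpoly, finsetSum_coeff, Finset.sum_eq_single (k - d)]
  · rw [coeff_C_mul_X_pow, if_pos (by omega), Nat.sub_sub_self hd]
  · intro j hj hjd
    rw [coeff_C_mul_X_pow, if_neg (by have := Finset.mem_range.mp hj; omega)]
  · exact fun h => absurd (Finset.mem_range.mpr (by omega)) h

lemma coeff_zero_comp_X_add_C : (P.comp (X + C r)).coeff 0 = P.eval r := by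
  simp [coeff_zero_eq_eval_zero, eval_comp]

lemma Qpoly_coeff_self : (Qpoly k M r P).coeff k = P.eval r * M ^ k := by
  rw [Qpoly_coeff le_rfl, Nat.sub_self, coeff_zero_comp_X_add_C]

lemma intPolyNorm_Qpoly (hM : 0 ≤ M)
    (h : ∀ j ≤ k, |(P.comp (X + C r)).coeff j| ≤ M ^ j * |(P.comp (X + C r)).coeff 0|) :
    intPolyNorm (Qpoly k M r P) = ((Qpoly k M r P).coeff k).natAbs := by
  refine intPolyNorm_eq_natAbs_coeff_of_forall_le fun d => ?_
  rcases le_or_gt d k with hd | hd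
  · rw [Qpoly_coeff hd, Qpoly_coeff le_rfl, Nat.sub_self, abs_mul, abs_mul, abs_pow, abs_pow,
      abs_of_nonneg hM]
    calc |(P.comp (X + C r)).coeff (k - d)| * M ^ d
        ≤ M ^ (k - d) * |(P.comp (X + C r)).coeff 0| * M ^ d := by
          gcongr; exact h _ (Nat.sub_le k d)
      _ = |(P.comp (X + C r)).coeff 0| * M ^ k := by
          rw [mul_comm (M ^ _), mul_assoc, ← pow_add, Nat.sub_add_cancel hd]
  · rw [coeff_eq_zero_of_natDegree_lt (Qpoly_natDegree_le.trans_lt hd), abs_zero]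
    exact abs_nonneg _

lemma aeval_Qpoly (hM : M ≠ 0) (hP : P.natDegree ≤ k) {ξ : ℝ} (hξ : ξ ≠ r) :
    (ξ - r) ^ k * aeval ((M * (ξ - r))⁻¹ : ℝ) (Qpoly k M r P) = aeval ξ P := by
  set y : ℝ := ξ - r
  have hy : y ≠ 0 := sub_ne_zero.mpr hξ
  have hMy : (M : ℝ) * (M * y)⁻¹ = y⁻¹ := by field_simp
  have hdeg : (P.comp (X + C r)).natDegree < k + 1 := by
    rw [natDegree_comp, natDegree_X_add_C, mul_one]; omega
  calc y ^ k * aeval ((M * y)⁻¹) (Qpoly k M r P)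
      = ∑ j ∈ Finset.range (k + 1), ((P.comp (X + C r)).coeff j : ℝ) * y ^ j := by
        simp only [Qpoly, map_sum, Finset.mul_sum, map_mul, map_pow, aeval_X, eq_intCast,
          map_intCast]
        refine Finset.sum_congr rfl fun j hj => ?_
        have hjk : j ≤ k := Nat.lt_succ_iff.mp (Finset.mem_range.mp hj)
        have hpow : y ^ k * y⁻¹ ^ (k - j) = y ^ j := by
          rw [inv_pow, ← pow_sub₀ y hy (Nat.sub_le k j), Nat.sub_sub_self hjk]
        rw [mul_assoc _ ((M : ℝ) ^ _), ← mul_pow, hMy, mul_left_comm, hpow, mul_comm]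
    _ = aeval y (P.comp (X + C r)) := by
        simp only [aeval_eq_sum_range' hdeg, zsmul_eq_mul]
    _ = aeval ξ P := by
        rw [aeval_comp]
        simp [y]

lemma abs_aeval_Qpoly_le (hM : M ≠ 0) (hP : P.natDegree ≤ k) {ξ : ℝ} (hξ : ξ + 1 ≤ r) :
    |aeval ((M * (ξ - r))⁻¹ : ℝ) (Qpoly k M r P)| ≤ |aeval ξ P| := by
  have hdist : 1 ≤ |ξ - r| := by
    rw [abs_sub_comm]; exact (by linarith : (1 : ℝ) ≤ r - ξ).trans (le_abs_self _)
  rw [← aeval_Qpoly hM hP (by linarith : ξ ≠ r), abs_mul, abs_pow]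
  exact le_mul_of_one_le_left (abs_nonneg _) (one_le_pow₀ hdist)

end Qpoly

lemma exists_rpow_neg_le_rpow_neg {D ω ω' : ℝ} (hD : 0 < D) (hω : ω' < ω) :
    ∃ K, ∀ H t : ℝ, 0 < H → H ≤ D * t → t ≤ D * H → K ≤ t → H ^ (-ω) ≤ t ^ (-ω') := by
  -- `log H` and `log t` differ by at most `log D`; the gap `ω - ω'` absorbs this once
  -- `(ω - ω') log t ≥ |ω| log D`.
  refine ⟨max 1 (Real.exp (|ω| * Real.log D / (ω - ω'))), fun H t hH hHt htH hK => ?_⟩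
  have ht : 0 < t := by linarith [le_max_left 1 (Real.exp (|ω| * Real.log D / (ω - ω')))]
  have hlog : |Real.log H - Real.log t| ≤ Real.log D := by
    rw [abs_sub_le_iff]
    constructor
    · linarith [Real.log_le_log hH hHt, Real.log_mul hD.ne' ht.ne']
    · linarith [Real.log_le_log ht htH, Real.log_mul hD.ne' hH.ne']
  have hlogt : |ω| * Real.log D ≤ (ω - ω') * Real.log t := by
    rw [← div_le_iff₀' (sub_pos.mpr hω), Real.le_log_iff_exp_le ht]
    exact (le_max_right _ _).trans hK
  have hω_log : |ω * Real.log H - ω * Real.log t| ≤ |ω| * Real.log D := by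
    rw [← mul_sub, abs_mul]; gcongr
  rw [Real.rpow_def_of_pos hH, Real.rpow_def_of_pos ht, Real.exp_le_exp]
  linarith [(abs_sub_le_iff.mp hω_log).2]

lemma dimH_le_dimH_image_inv_mul_sub {M r : ℝ} (hM : 0 < M) {s : Set ℝ} (hs : s ⊆ Set.Iio r) :
    dimH s ≤ dimH ((fun x => (M * (x - r))⁻¹) '' s) := by
  set f : ℝ → ℝ := fun x => (M * (x - r))⁻¹
  set g : ℝ → ℝ := fun u => r + (M * u)⁻¹
  have hf : f '' s ⊆ Set.Iio 0 := by
    rintro _ ⟨x, hx, rfl⟩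
    exact inv_lt_zero.mpr (mul_neg_of_pos_of_neg hM (sub_neg.mpr (hs hx)))
  have hgf : g '' (f '' s) = s := by
    rw [Set.image_image]
    refine (Set.image_congr fun x hx => ?_).trans (Set.image_id' s)
    have : x - r ≠ 0 := sub_ne_zero.mpr (hs hx).ne
    simp only [f, g]
    field_simp
    ring
  have hg : ContDiffOn ℝ 1 g (Set.Iio 0) :=
    contDiffOn_const.add ((contDiffOn_const.mul contDiffOn_id).inv fun u hu =>
      mul_ne_zero hM.ne' (Set.mem_Iio.mp hu).ne)
  calc dimH s = dimH (g '' (f '' s)) := by rw [hgf]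
    _ ≤ dimH (f '' s) := hg.dimH_image_le (convex_Iio 0) hf

section Transfer

variable {k : ℕ} {M r : ℤ} {c cN : ℝ}

lemma intPolyNorm_Qpoly_of_node (hc : 0 ≤ c) (hM : 1 ≤ M) (hMc : cN * c ≤ M) {P : ℤ[X]}
    (hshift : ∀ j, |((P.comp (X + C r)).coeff j : ℝ)| ≤ c * intPolyNorm P)
    (hnode : intPolyNorm P ≤ cN * |((P.eval r : ℤ) : ℝ)|) :
    intPolyNorm (Qpoly k M r P) = ((Qpoly k M r P).coeff k).natAbs := by
  refine intPolyNorm_Qpoly (by omega) fun j _ => ?_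
  rw [coeff_zero_comp_X_add_C]
  rcases j.eq_zero_or_pos with rfl | hj
  · rw [coeff_zero_comp_X_add_C, pow_zero, one_mul]
  have hMj : (M : ℝ) ≤ M ^ j := le_self_pow₀ (by exact_mod_cast hM) hj.ne'
  have : |((P.comp (X + C r)).coeff j : ℝ)| ≤ M ^ j * |((P.eval r : ℤ) : ℝ)| :=
    calc |((P.comp (X + C r)).coeff j : ℝ)| ≤ c * intPolyNorm P := hshift j
      _ ≤ c * (cN * |((P.eval r : ℤ) : ℝ)|) := by gcongr
      _ = cN * c * |((P.eval r : ℤ) : ℝ)| := by ring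
      _ ≤ M ^ j * |((P.eval r : ℤ) : ℝ)| := by gcongr; exact hMc.trans hMj
  exact_mod_cast this

lemma coe_le_omegaLeadExp_of_node (w : ℝ) (hc : 0 ≤ c) (hcN : 0 ≤ cN)
    (hshift : ∀ P : ℤ[X], P.natDegree ≤ k → ∀ j,
      |((P.comp (X + C r)).coeff j : ℝ)| ≤ c * intPolyNorm P)
    (hM : 1 ≤ M) (hMc : cN * c ≤ M) {ξ : ℝ} (hξr : ξ + 1 ≤ r)
    (hξ : ∀ ω < w, {P ∈ approxSet k ξ ω | intPolyNorm P ≤ cN * |((P.eval r : ℤ) : ℝ)|}.Infinite) :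
    (w : EReal) ≤ omegaLeadExp k ((M * (ξ - r))⁻¹ : ℝ) := by
  rw [coe_le_omegaLeadExp_iff]
  intro ω' hω'
  obtain ⟨ω, hω'ω, hωw⟩ := exists_between hω'
  set D : ℝ := c * M ^ k + cN + 1
  have hD : 0 < D := by positivity
  obtain ⟨K, hK⟩ := exists_rpow_neg_le_rpow_neg hD hω'ω
  have hsource := hξ ω hωw
  rw [infinite_iff_forall_exists_lt_intPolyNorm fun P hP => hP.1.2.1] at hsource ⊢
  intro B
  obtain ⟨P, ⟨⟨hP0, hPk, hPξ⟩, hnode⟩, hPB⟩ := hsource (D * max K B)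
  set Q := Qpoly k M r P
  have hlead : intPolyNorm Q = (Q.coeff k).natAbs :=
    intPolyNorm_Qpoly_of_node hc hM hMc (hshift P hPk) hnode
  have hMk : (1 : ℝ) ≤ (M : ℝ) ^ k := one_le_pow₀ (by exact_mod_cast hM)
  have hQ : intPolyNorm Q = |((P.eval r : ℤ) : ℝ)| * M ^ k := by
    rw [hlead, Qpoly_coeff_self, Int.natAbs_mul, Int.natAbs_pow]
    push_cast [Nat.cast_natAbs]
    rw [abs_of_pos (by exact_mod_cast hM : (0 : ℝ) < M)]
  have hPQ : intPolyNorm P ≤ D * intPolyNorm Q :=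
    calc intPolyNorm P ≤ cN * |((P.eval r : ℤ) : ℝ)| := hnode
      _ ≤ D * intPolyNorm Q := by
        rw [hQ]; gcongr
        · linarith [mul_nonneg hc (zero_le_one.trans hMk)]
        · exact le_mul_of_one_le_right (abs_nonneg _) hMk
  have hQP : intPolyNorm Q ≤ D * intPolyNorm P := by
    have h0 := hshift P hPk 0
    rw [coeff_zero_comp_X_add_C] at h0
    rw [hQ]
    nlinarith [one_le_intPolyNorm hP0]
  have hQlarge : max K B < intPolyNorm Q := lt_of_mul_lt_mul_left (hPB.trans_le hPQ) hD.le
  have hP_pos : 0 < intPolyNorm P := one_pos.trans_le (one_le_intPolyNorm hP0)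
  refine ⟨Q, ⟨⟨?_, Qpoly_natDegree_le, ?_⟩, hlead.symm⟩, (le_max_right _ _).trans_lt hQlarge⟩
  · intro hQ0
    have hQ_zero : intPolyNorm Q = 0 := by simp [hQ0, intPolyNorm]
    rw [hQ_zero, mul_zero] at hPQ
    linarith
  · calc |aeval ((M * (ξ - r))⁻¹ : ℝ) Q| ≤ |aeval ξ P| := abs_aeval_Qpoly_le (by omega) hPk hξr
      _ ≤ intPolyNorm P ^ (-ω) := hPξ
      _ ≤ intPolyNorm Q ^ (-ω') :=
        hK _ _ hP_pos hPQ hQP ((le_max_left _ _).trans hQlarge.le)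

end Transfer

lemma aeval_intCast (P : ℤ[X]) (n : ℤ) : aeval (n : ℝ) P = ((P.eval n : ℤ) : ℝ) := by
  simpa using aeval_algebraMap_apply_eq_algebraMap_eval (A := ℝ) n P

lemma dimH_le_dimH_omegaLeadExp_of_node (k : ℕ) (w : ℝ) (r : ℤ) {cN : ℝ} (hcN : 0 ≤ cN)
    {s : Set ℝ} (hs : ∀ ξ ∈ s, ξ + 1 ≤ r ∧
      ∀ ω < w, {P ∈ approxSet k ξ ω | intPolyNorm P ≤ cN * |((P.eval r : ℤ) : ℝ)|}.Infinite) :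
    dimH s ≤ dimH {ζ : ℝ | (w : EReal) ≤ omegaLeadExp k ζ} := by
  obtain ⟨c, hc, hshift⟩ := exists_abs_coeff_comp_X_add_C_le k r
  set M : ℤ := max ⌈cN * c⌉ 1
  have hM : 1 ≤ M := le_max_right _ _
  have hMc : cN * c ≤ M := (Int.le_ceil _).trans (by exact_mod_cast le_max_left _ _)
  calc dimH s ≤ dimH ((fun x => ((M : ℝ) * (x - r))⁻¹) '' s) :=
        dimH_le_dimH_image_inv_mul_sub (by exact_mod_cast hM) fun ξ hξ =>
          Set.mem_Iio.mpr (by linarith [(hs ξ hξ).1])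
    _ ≤ _ := dimH_mono <| by
        rintro _ ⟨ξ, hξ, rfl⟩
        exact coe_le_omegaLeadExp_of_node w hc hcN hshift hM hMc (hs ξ hξ).1 (hs ξ hξ).2

lemma dimH_omegaExp_inter_Ico_le (k : ℕ) (w : ℝ) (N : ℤ) :
    dimH ({ξ : ℝ | (w : EReal) ≤ omegaExp k ξ} ∩ Set.Ico (N : ℝ) (N + 1)) ≤
      dimH {ζ : ℝ | (w : EReal) ≤ omegaLeadExp k ζ} := by
  -- Nodes at distance at least `1` from `[N, N + 1)`, so that `|ξ - r| ≥ 1` in the transfer.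
  set node : Fin (k + 1) → ℤ := fun i => N + 2 + i
  have hnode : Function.Injective fun i => (node i : ℝ) := fun i j hij =>
    Fin.ext (by simpa [node] using hij)
  obtain ⟨C, hC0, hC⟩ := exists_intPolyNorm_le_mul_abs_aeval hnode
  set good : ℝ → ℝ → Fin (k + 1) → Prop := fun ξ ω i =>
    {P ∈ approxSet k ξ ω | intPolyNorm P ≤ C * |((P.eval (node i) : ℤ) : ℝ)|}.Infinite
  set E : Fin (k + 1) → Set ℝ := fun i => {ξ | ξ + 1 ≤ node i ∧ ∀ ω < w, good ξ ω i}
  have hcover : {ξ : ℝ | (w : EReal) ≤ omegaExp k ξ} ∩ Set.Ico (N : ℝ) (N + 1) ⊆ ⋃ i, E i := by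
    rintro ξ ⟨hξ, -, hξN⟩
    have hanti : ∀ i, Antitone (good ξ · i) := fun i _ _ hab h =>
      h.mono fun _ hP => ⟨approxSet_antitone k ξ hab hP.1, hP.2⟩
    have hsome : ∀ ω < w, ∃ i, good ξ ω i := fun ω hω => by
      by_contra! hfin
      refine (coe_le_omegaExp_iff w |>.mp hξ ω hω) ((Set.finite_iUnion fun i =>
        Set.not_infinite.mp (hfin i)).subset fun P hP => ?_)
      obtain ⟨i, hi⟩ := hC P hP.2.1
      exact Set.mem_iUnion.mpr ⟨i, hP, by rwa [← aeval_intCast]⟩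
    obtain ⟨i, hi⟩ := exists_forall_lt_of_antitone hanti hsome
    refine Set.mem_iUnion.mpr ⟨i, ?_, hi⟩
    have : (N : ℝ) + 2 ≤ node i := by simp [node]
    linarith
  calc dimH ({ξ : ℝ | (w : EReal) ≤ omegaExp k ξ} ∩ Set.Ico (N : ℝ) (N + 1))
      ≤ dimH (⋃ i, E i) := dimH_mono hcover
    _ = ⨆ i, dimH (E i) := dimH_iUnion E
    _ ≤ _ := iSup_le fun i => dimH_le_dimH_omegaLeadExp_of_node k w (node i) hC0 fun _ hξ => hξ

theorem corollary2_ge_general (k : ℕ) (w : ℝ) :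
    dimH {ξ : ℝ | (w : EReal) ≤ omegaExp k ξ} =
      dimH {ξ : ℝ | (w : EReal) ≤ omegaLeadExp k ξ} := by
  refine le_antisymm ?_ (dimH_mono fun ξ hξ => hξ.trans (omegaLeadExp_le_omegaExp k ξ))
  calc dimH {ξ : ℝ | (w : EReal) ≤ omegaExp k ξ}
      = dimH (⋃ N : ℤ, {ξ : ℝ | (w : EReal) ≤ omegaExp k ξ} ∩ Set.Ico (N : ℝ) (N + 1)) := by
        rw [← Set.inter_iUnion, iUnion_Ico_intCast, Set.inter_univ]
    _ = ⨆ N : ℤ, dimH ({ξ : ℝ | (w : EReal) ≤ omegaExp k ξ} ∩ Set.Ico (N : ℝ) (N + 1)) :=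
        dimH_iUnion _
    _ ≤ _ := iSup_le (dimH_omegaExp_inter_Ico_le k w)

/-- The sets `{ξ : ω_k(ξ) ≥ w}` and `{ξ : ω_k^lead(ξ) ≥ w}` have the same
Hausdorff dimension. -/
theorem corollary2_ge (k : ℕ) (hk : 1 ≤ k) (w : ℝ) :
    dimH {ξ : ℝ | (w : EReal) ≤ omegaExp k ξ} =
      dimH {ξ : ℝ | (w : EReal) ≤ omegaLeadExp k ξ} :=
  corollary2_ge_general k w
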